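/- The exponential growth rate of PGL(2,ℤ) = ⟨a, b, c | a² = b² = c² = (ab)² = (ac)³ = 1⟩ with respect to the generating set S = {a, b, c} equals the unique positive root α of the polynomial z³ - z - 1. -/

import Mathlib

open Filter

/-- The word length of `g` with respect to a generating set `S` (letters from `S ∪ S⁻¹`). -/
noncomputable def wordLength {G : Type*} [Group G] (S : Set G) (g : G) : ℕ :=
  sInf {n | ∃ l : List G, l.length = n ∧ (∀ x ∈ l, x ∈ S ∨ x⁻¹ ∈ S) ∧ l.prod = g}

/-- Relators of `PGL(2,ℤ) = ⟨a, b, c ∣ a² = b² = c² = (ab)² = (ac)³ = 1⟩`,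
with `0 ↦ a`, `1 ↦ b`, `2 ↦ c`. -/
def pglRels : Set (FreeGroup (Fin 3)) :=
  {FreeGroup.of 0 ^ 2, FreeGroup.of 1 ^ 2, FreeGroup.of 2 ^ 2,
   (FreeGroup.of 0 * FreeGroup.of 1) ^ 2, (FreeGroup.of 0 * FreeGroup.of 2) ^ 3}

/-!
Every word in `a, b, c` can be rewritten, without getting longer, into one avoiding the factors
`aa, bb, cc, ba, cac`; such a word is `[a][b] w [c | ca]` with `w` a product of the blocks `cb`
and `cab`. So the ball of radius `n` has at most `12 N(n)` elements, where `N(n)` counts block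
sequences of total length at most `n`; since `N(n + 3) = N(n + 1) + N(n) + 1`, `N(n)` grows like
`αⁿ`. Conversely, distinct block products are distinct group elements, because in an integral
linear action of the group `cb` and `cab` play ping-pong on a cone. Hence the ball has between
`αⁿ / 2` and `36 αⁿ` elements, and its `n`-th root tends to `α`.
-/

open Topology Function
open scoped Finset

theorem tendsto_rpow_one_div_of_mul_pow_le_of_le_mul_pow {f : ℕ → ℝ} {α c C : ℝ} (hα : 0 ≤ α)
    (hc : 0 < c) (hlo : ∀ n, c * α ^ n ≤ f n) (hup : ∀ n, f n ≤ C * α ^ n) :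
    Tendsto (fun n : ℕ => f n ^ (1 / (n : ℝ))) atTop (𝓝 α) := by
  have hC : 0 < C := hc.trans_le (by simpa using (hlo 0).trans (hup 0))
  have root_mul_pow {K : ℝ} (hK : 0 < K) :
      Tendsto (fun n : ℕ => (K * α ^ n) ^ (1 / (n : ℝ))) atTop (𝓝 α) := by
    have hK1 : Tendsto (fun n : ℕ => K ^ (1 / (n : ℝ))) atTop (𝓝 1) := by
      simpa using tendsto_const_nhds.rpow tendsto_one_div_atTop_nhds_zero_nat (Or.inl hK.ne')
    have hlim : Tendsto (fun n : ℕ => K ^ (1 / (n : ℝ)) * α) atTop (𝓝 α) := by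
      simpa using hK1.mul_const α
    refine hlim.congr' ?_
    filter_upwards [eventually_ne_atTop 0] with n hn
    rw [Real.mul_rpow hK.le (by positivity), ← Real.rpow_natCast, ← Real.rpow_mul hα,
      mul_one_div_cancel (by exact_mod_cast hn), Real.rpow_one]
  refine tendsto_of_tendsto_of_tendsto_of_le_of_le (root_mul_pow hc) (root_mul_pow hC)
    (fun n => ?_) (fun n => ?_)
  · exact Real.rpow_le_rpow (by positivity) (hlo n) (by positivity)
  · exact Real.rpow_le_rpow ((mul_nonneg hc.le (by positivity)).trans (hlo n)) (hup n)
      (by positivity)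

theorem mul_pow_le_of_add_le {u : ℕ → ℝ} {α c : ℝ} (hα : α ^ 3 = α + 1)
    (hrec : ∀ n, u (n + 1) + u n ≤ u (n + 3))
    (h₀ : c ≤ u 0) (h₁ : c * α ≤ u 1) (h₂ : c * α ^ 2 ≤ u 2) : ∀ n, c * α ^ n ≤ u n
  | 0 => by simpa using h₀
  | 1 => by simpa using h₁
  | 2 => h₂
  | n + 3 => by
    calc c * α ^ (n + 3) = c * α ^ (n + 1) + c * α ^ n := by
          rw [pow_add _ n 3, hα]; ring
      _ ≤ u (n + 3) := (add_le_add (mul_pow_le_of_add_le hα hrec h₀ h₁ h₂ (n + 1))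
          (mul_pow_le_of_add_le hα hrec h₀ h₁ h₂ n)).trans (hrec n)

theorem le_mul_pow_of_le_add {u : ℕ → ℝ} {α C : ℝ} (hα : α ^ 3 = α + 1)
    (hrec : ∀ n, u (n + 3) ≤ u (n + 1) + u n)
    (h₀ : u 0 ≤ C) (h₁ : u 1 ≤ C * α) (h₂ : u 2 ≤ C * α ^ 2) : ∀ n, u n ≤ C * α ^ n := by
  intro n
  have hneg := mul_pow_le_of_add_le (u := fun n => -u n) (c := -C) hα
    (fun n => by linarith [hrec n]) (by linarith) (by linarith) (by linarith) n
  linarith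

section WordLength

variable {G : Type*} [Group G] {S : Set G}

theorem wordLength_prod_le {l : List G} (hl : ∀ x ∈ l, x ∈ S ∨ x⁻¹ ∈ S) :
    wordLength S l.prod ≤ l.length :=
  Nat.sInf_le ⟨l, rfl, hl, rfl⟩

theorem exists_list_length_eq_wordLength (hS : Subgroup.closure S = ⊤) (g : G) :
    ∃ l : List G, l.length = wordLength S g ∧ (∀ x ∈ l, x ∈ S ∨ x⁻¹ ∈ S) ∧ l.prod = g := by
  refine Nat.sInf_mem (s := {n | ∃ l : List G, l.length = n ∧ _ ∧ l.prod = g}) ?_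
  have hg : g ∈ Submonoid.closure (S ∪ S⁻¹) := by
    rw [← Subgroup.closure_toSubmonoid, hS]; trivial
  obtain ⟨l, hl, rfl⟩ := Submonoid.exists_list_of_mem_closure hg
  exact ⟨_, l, rfl, fun x hx => hl x hx, rfl⟩

end WordLength

section Rewriting

variable {α : Type*}

def IsIrreducibleWord (R : List (List α × List α)) (w : List α) : Prop :=
  ∀ p ∈ R, ¬ p.1 <:+: w

variable {R : List (List α × List α)}

theorem IsIrreducibleWord.of_cons {x : α} {w : List α} (hw : IsIrreducibleWord R (x :: w)) :
    IsIrreducibleWord R w :=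
  fun p hp hv => hw p hp (hv.trans (List.suffix_cons x w).isInfix)

theorem not_isIrreducibleWord_append {p : List α × List α} (hp : p ∈ R) (w : List α) :
    ¬ IsIrreducibleWord R (p.1 ++ w) :=
  fun h => h p hp (List.prefix_append _ _).isInfix

theorem exists_isIrreducibleWord {M : Type*} [Monoid M] (f : α → M) (rank : List α → ℕ)
    (hsound : ∀ p ∈ R, (p.1.map f).prod = (p.2.map f).prod)
    (hlen : ∀ p ∈ R, p.2.length ≤ p.1.length)
    (hrank : ∀ p ∈ R, ∀ u v, rank (u ++ p.2 ++ v) < rank (u ++ p.1 ++ v)) (w : List α) :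
    ∃ w', IsIrreducibleWord R w' ∧ (w'.map f).prod = (w.map f).prod ∧ w'.length ≤ w.length := by
  induction w using (measure rank).wf.induction with
  | _ w ih =>
    by_cases hw : IsIrreducibleWord R w
    · exact ⟨w, hw, rfl, le_rfl⟩
    obtain ⟨p, hp, u, v, rfl⟩ : ∃ p ∈ R, p.1 <:+: w := by
      simpa [IsIrreducibleWord] using hw
    obtain ⟨w', hw', heq, hle⟩ := ih (u ++ p.2 ++ v) (hrank p hp u v)
    refine ⟨w', hw', by simp [heq, hsound p hp], ?_⟩
    simp only [List.length_append] at hle ⊢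
    linarith [hlen p hp]

/-- Reading `d + 1` as a digit in base `k + 1`, longer words have larger rank and words of equal
length are ranked lexicographically. -/
def shortlexRank {k : ℕ} : List (Fin k) → ℕ
  | [] => 0
  | d :: w => (d + 1) * (k + 1) ^ w.length + shortlexRank w

theorem shortlexRank_append {k : ℕ} (u v : List (Fin k)) :
    shortlexRank (u ++ v) = shortlexRank u * (k + 1) ^ v.length + shortlexRank v := by
  induction u with
  | nil => simp [shortlexRank]
  | cons d u ih => simp only [List.cons_append, shortlexRank, ih, List.length_append]; ring

theorem shortlexRank_append_lt {k : ℕ} {p q : List (Fin k)} (hlen : q.length ≤ p.length)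
    (hrank : shortlexRank q < shortlexRank p) (u v : List (Fin k)) :
    shortlexRank (u ++ q ++ v) < shortlexRank (u ++ p ++ v) := by
  simp only [shortlexRank_append]
  gcongr ?_ * _ + _
  calc shortlexRank u * (k + 1) ^ q.length + shortlexRank q
      < shortlexRank u * (k + 1) ^ q.length + shortlexRank p := by gcongr
    _ ≤ shortlexRank u * (k + 1) ^ p.length + shortlexRank p := by gcongr; omega

end Rewriting

theorem injective_foldr_of_pingPong {ι X : Type*} {e : ι → X → X} {K : Set X} {P : ι → Set X}
    {x₀ : X} (he : ∀ i, Injective (e i)) (hmaps : ∀ i, Set.MapsTo (e i) K (K ∩ P i))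
    (hP : Pairwise (Disjoint on P)) (hx₀ : x₀ ∈ K) (hx₀P : ∀ i, x₀ ∉ P i) :
    Injective fun l : List ι => l.foldr e x₀ := by
  have hK : ∀ l : List ι, l.foldr e x₀ ∈ K := fun l => by
    induction l with
    | nil => exact hx₀
    | cons i l ih => exact (hmaps i ih).1
  have hPi (i : ι) (l : List ι) : e i (l.foldr e x₀) ∈ P i := (hmaps i (hK l)).2
  intro l₁ l₂ (h : l₁.foldr e x₀ = l₂.foldr e x₀)
  induction l₁ generalizing l₂ with
  | nil =>
    cases l₂ with
    | nil => rfl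
    | cons j l₂ =>
      rw [List.foldr_nil, List.foldr_cons] at h
      exact (hx₀P j (h ▸ hPi j l₂)).elim
  | cons i l₁ ih =>
    cases l₂ with
    | nil =>
      rw [List.foldr_nil, List.foldr_cons] at h
      exact (hx₀P i (h ▸ hPi i l₁)).elim
    | cons j l₂ =>
      simp only [List.foldr_cons] at h
      obtain rfl : i = j := by
        by_contra hij
        exact (hP hij).notMem_of_mem_left (hPi i l₁) (h ▸ hPi j l₂)
      rw [ih (he i h)]

namespace PGL

local notation "Γ" => PresentedGroup pglRels

abbrev gen : Fin 3 → Γ := PresentedGroup.of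

theorem gen_mul_self (i : Fin 3) : gen i * gen i = 1 := by
  have h : PresentedGroup.mk pglRels (FreeGroup.of i ^ 2) = 1 :=
    PresentedGroup.one_of_mem (by fin_cases i <;> simp [pglRels])
  rwa [map_pow, sq] at h

theorem gen_inv (i : Fin 3) : (gen i)⁻¹ = gen i := inv_eq_of_mul_eq_one_right (gen_mul_self i)

theorem gen_one_mul_gen_zero : gen 1 * gen 0 = gen 0 * gen 1 := by
  have h : PresentedGroup.mk pglRels ((FreeGroup.of 0 * FreeGroup.of 1) ^ 2) = 1 :=
    PresentedGroup.one_of_mem (by simp [pglRels])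
  rw [map_pow, map_mul, sq] at h
  calc gen 1 * gen 0 = (gen 0 * gen 1)⁻¹ := by rw [mul_inv_rev, gen_inv, gen_inv]
    _ = gen 0 * gen 1 := inv_eq_of_mul_eq_one_right h

theorem gen_braid : gen 2 * gen 0 * gen 2 = gen 0 * gen 2 * gen 0 := by
  have h : gen 0 * gen 2 * (gen 0 * gen 2 * (gen 0 * gen 2)) = 1 := by
    have h : PresentedGroup.mk pglRels ((FreeGroup.of 0 * FreeGroup.of 2) ^ 3) = 1 :=
      PresentedGroup.one_of_mem (by simp [pglRels])
    rwa [map_pow, map_mul, pow_succ', sq] at h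
  calc gen 2 * gen 0 * gen 2 = (gen 0 * gen 2)⁻¹ * gen 2 := by rw [mul_inv_rev, gen_inv, gen_inv]
    _ = gen 0 * gen 2 * (gen 0 * gen 2) * gen 2 := by rw [inv_eq_of_mul_eq_one_right h]
    _ = gen 0 * gen 2 * gen 0 := by simp only [mul_assoc, gen_mul_self, mul_one]

def rules : List (List (Fin 3) × List (Fin 3)) :=
  [([0, 0], []), ([1, 1], []), ([2, 2], []), ([1, 0], [0, 1]), ([2, 0, 2], [0, 2, 0])]

theorem exists_irreducible_prod_eq (w : List (Fin 3)) :
    ∃ w', IsIrreducibleWord rules w' ∧ (w'.map gen).prod = (w.map gen).prod ∧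
      w'.length ≤ w.length := by
  have hrules : ∀ p ∈ rules, p.2.length ≤ p.1.length ∧ shortlexRank p.2 < shortlexRank p.1 := by
    decide
  refine exists_isIrreducibleWord gen shortlexRank ?_ (fun p hp => (hrules p hp).1)
    (fun p hp => shortlexRank_append_lt (hrules p hp).1 (hrules p hp).2) w
  simp [rules, gen_mul_self, gen_one_mul_gen_zero, ← mul_assoc, gen_braid]

def block (b : Bool) : List (Fin 3) := if b then [2, 0, 1] else [2, 1]

def skeleton (l : List Bool) : List (Fin 3) := l.flatMap block

@[simp] theorem skeleton_nil : skeleton [] = [] := rfl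

@[simp] theorem skeleton_cons (b : Bool) (l : List Bool) :
    skeleton (b :: l) = block b ++ skeleton l := List.flatMap_cons

def heads : Finset (List (Fin 3)) := {[], [0], [1], [0, 1]}

def tails : Finset (List (Fin 3)) := {[], [2], [2, 0]}

theorem head_eq_two_of_one_cons {w : List (Fin 3)} (hw : IsIrreducibleWord rules (1 :: w)) :
    ∀ x ∈ w.head?, x = 2 := by
  match w with
  | [] => simp
  | 0 :: w => exact absurd hw (not_isIrreducibleWord_append (p := ([1, 0], [0, 1])) (by decide) w)
  | 1 :: w => exact absurd hw (not_isIrreducibleWord_append (p := ([1, 1], [])) (by decide) w)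
  | 2 :: w => simp

theorem exists_skeleton_append :
    ∀ w : List (Fin 3), IsIrreducibleWord rules w → (∀ x ∈ w.head?, x = 2) →
      ∃ l, ∃ t ∈ tails, w = skeleton l ++ t
  | [], _, _ => ⟨[], [], by decide, rfl⟩
  | [2], _, _ => ⟨[], [2], by decide, rfl⟩
  | [2, 0], _, _ => ⟨[], [2, 0], by decide, rfl⟩
  | 2 :: 1 :: w, hw, _ => by
    obtain ⟨l, t, ht, rfl⟩ :=
      exists_skeleton_append w hw.of_cons.of_cons (head_eq_two_of_one_cons hw.of_cons)
    exact ⟨false :: l, t, ht, by simp [block]⟩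
  | 2 :: 0 :: 1 :: w, hw, _ => by
    obtain ⟨l, t, ht, rfl⟩ := exists_skeleton_append w hw.of_cons.of_cons.of_cons
      (head_eq_two_of_one_cons hw.of_cons.of_cons)
    exact ⟨true :: l, t, ht, by simp [block]⟩
  | 2 :: 0 :: 0 :: w, hw, _ =>
    absurd hw.of_cons (not_isIrreducibleWord_append (p := ([0, 0], [])) (by decide) w)
  | 2 :: 0 :: 2 :: w, hw, _ =>
    absurd hw (not_isIrreducibleWord_append (p := ([2, 0, 2], [0, 2, 0])) (by decide) w)
  | 2 :: 2 :: w, hw, _ =>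
    absurd hw (not_isIrreducibleWord_append (p := ([2, 2], [])) (by decide) w)
  | 0 :: _, _, h => absurd (h 0 rfl) (by decide)
  | 1 :: _, _, h => absurd (h 1 rfl) (by decide)

theorem exists_normalForm {w : List (Fin 3)} (hw : IsIrreducibleWord rules w) :
    ∃ h ∈ heads, ∃ l, ∃ t ∈ tails, w = h ++ skeleton l ++ t := by
  suffices ∃ h ∈ heads, ∃ w', w = h ++ w' ∧ IsIrreducibleWord rules w' ∧ ∀ x ∈ w'.head?, x = 2 by
    obtain ⟨h, hh, w', rfl, hw', hc⟩ := this
    obtain ⟨l, t, ht, rfl⟩ := exists_skeleton_append w' hw' hc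
    exact ⟨h, hh, l, t, ht, by simp⟩
  match w with
  | [] => exact ⟨[], by decide, [], rfl, hw, by simp⟩
  | [0] => exact ⟨[0], by decide, [], rfl, hw.of_cons, by simp⟩
  | 0 :: 0 :: w => exact absurd hw (not_isIrreducibleWord_append (p := ([0, 0], [])) (by decide) w)
  | 0 :: 1 :: w =>
    exact ⟨[0, 1], by decide, w, rfl, hw.of_cons.of_cons, head_eq_two_of_one_cons hw.of_cons⟩
  | 0 :: 2 :: w => exact ⟨[0], by decide, 2 :: w, rfl, hw.of_cons, by simp⟩
  | 1 :: w => exact ⟨[1], by decide, w, rfl, hw.of_cons, head_eq_two_of_one_cons hw⟩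
  | 2 :: w => exact ⟨[], by decide, 2 :: w, rfl, hw, by simp⟩

theorem length_block (b : Bool) : (block b).length = if b then 3 else 2 := by
  cases b <;> rfl

theorem skeleton_eq_nil {l : List Bool} : skeleton l = [] ↔ l = [] := by
  cases l with
  | nil => simp
  | cons b l => cases b <;> simp [block]

def flagsUpTo : ℕ → Finset (List Bool)
  | 0 => {[]}
  | 1 => {[]}
  | 2 => {[], [false]}
  | n + 3 => insert [] ((flagsUpTo (n + 1)).image (false :: ·) ∪ (flagsUpTo n).image (true :: ·))

theorem mem_flagsUpTo {n : ℕ} {l : List Bool} : l ∈ flagsUpTo n ↔ (skeleton l).length ≤ n := by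
  match n, l with
  | 0, [] | 1, [] | 2, [] | n + 3, [] => simp [flagsUpTo]
  | 0, b :: l | 1, b :: l => cases b <;> simp [flagsUpTo, length_block] <;> omega
  | 2, false :: l => simp [flagsUpTo, length_block, skeleton_eq_nil]
  | 2, true :: l => simp [flagsUpTo, length_block]; omega
  | n + 3, false :: l => simp [flagsUpTo, length_block, mem_flagsUpTo (n := n + 1)]; omega
  | n + 3, true :: l => simp [flagsUpTo, length_block, mem_flagsUpTo (n := n)]; omega

theorem card_flagsUpTo_add_three (n : ℕ) :
    #(flagsUpTo (n + 3)) = #(flagsUpTo (n + 1)) + #(flagsUpTo n) + 1 := by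
  rw [flagsUpTo, Finset.card_insert_of_notMem (by simp), Finset.card_union_of_disjoint
    (Finset.disjoint_left.2 (by simp)), Finset.card_image_of_injective _ List.cons_injective,
    Finset.card_image_of_injective _ List.cons_injective]

theorem half_mul_pow_le_card_flagsUpTo {α : ℝ} (hα : α ^ 3 = α + 1) (h2 : α ≤ 2) (n : ℕ) :
    1 / 2 * α ^ n ≤ #(flagsUpTo n) :=
  mul_pow_le_of_add_le (u := fun n => (#(flagsUpTo n) : ℝ)) hα
    (fun n => by simp only [card_flagsUpTo_add_three]; push_cast; linarith)
    (by norm_num [flagsUpTo]) (by norm_num [flagsUpTo]; linarith)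
    (by norm_num [flagsUpTo]; nlinarith) n

theorem card_flagsUpTo_add_one_le {α : ℝ} (hα : α ^ 3 = α + 1) (h1 : 1 ≤ α) (n : ℕ) :
    (#(flagsUpTo n) : ℝ) + 1 ≤ 3 * α ^ n :=
  le_mul_pow_of_le_add (u := fun n => (#(flagsUpTo n) : ℝ) + 1) hα
    (fun n => by simp only [card_flagsUpTo_add_three]; push_cast; linarith)
    (by norm_num [flagsUpTo]) (by norm_num [flagsUpTo]; linarith)
    (by norm_num [flagsUpTo]; nlinarith [abs_of_nonneg (zero_le_one.trans h1)]) n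

def reflectionMap : Fin 3 → ℤ × ℤ × ℤ → ℤ × ℤ × ℤ :=
  ![fun (x, y, z) => (z - x, y, z), fun (x, y, z) => (x, 2 * z - y, z),
    fun (x, y, z) => (x, y, x + 2 * y - z)]

theorem involutive_reflectionMap (i : Fin 3) : Involutive (reflectionMap i) := by
  rintro ⟨x, y, z⟩
  fin_cases i <;> simp [reflectionMap]

def reflection (i : Fin 3) : Equiv.Perm (ℤ × ℤ × ℤ) := (involutive_reflectionMap i).toPerm _

theorem reflection_rels : ∀ r ∈ pglRels, FreeGroup.lift reflection r = 1 := by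
  simp only [pglRels, Set.mem_insert_iff, Set.mem_singleton_iff]
  rintro r (rfl | rfl | rfl | rfl | rfl) <;> ext ⟨x, y, z⟩ <;>
    simp [reflection, reflectionMap, pow_succ, Equiv.Perm.mul_apply] <;> ring

def reflectionHom : Γ →* Equiv.Perm (ℤ × ℤ × ℤ) := PresentedGroup.toGroup reflection_rels

@[simp] theorem reflectionHom_gen (i : Fin 3) : reflectionHom (gen i) = reflection i :=
  PresentedGroup.toGroup.of reflection_rels

/-- `cb` and `cab` map `cone` into itself, onto opposite sides of the plane `x - 2y + z = 0`,
which contains `(0, 1, 2) ∈ cone`: they play ping-pong. -/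
def cone : Set (ℤ × ℤ × ℤ) := {v | 0 ≤ v.1 ∧ 2 * v.1 < v.2.2 ∧ v.2.2 ≤ 2 * v.2.1 ∧ v.2.1 < v.2.2}

def side (b : Bool) : Set (ℤ × ℤ × ℤ) :=
  bif b then {v | 0 < v.1 - 2 * v.2.1 + v.2.2} else {v | v.1 - 2 * v.2.1 + v.2.2 < 0}

theorem mapsTo_block (b : Bool) :
    Set.MapsTo (reflectionHom ((block b).map gen).prod) cone (cone ∩ side b) := by
  rintro ⟨x, y, z⟩ ⟨h₀, h₁, h₂, h₃⟩
  dsimp only at h₀ h₁ h₂ h₃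
  cases b <;> simp [block, reflection, reflectionMap, side, cone, Equiv.Perm.mul_apply] <;> omega

theorem reflectionHom_skeleton_apply (l : List Bool) (v : ℤ × ℤ × ℤ) :
    reflectionHom ((skeleton l).map gen).prod v =
      l.foldr (fun b => reflectionHom ((block b).map gen).prod) v := by
  induction l with
  | nil => simp
  | cons b l ih => simp [ih, Equiv.Perm.mul_apply]

theorem injective_prod_skeleton : Injective fun l : List Bool => ((skeleton l).map gen).prod := by
  intro l₁ l₂ h
  refine injective_foldr_of_pingPong (x₀ := (0, 1, 2)) (fun b => Equiv.injective _) mapsTo_block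
    (pairwise_disjoint_on_bool.2 ?_) (by simp [cone]) (fun b => by cases b <;> simp [side]) ?_
  · exact Set.disjoint_left.2 fun v (hv : 0 < v.1 - 2 * v.2.1 + v.2.2) hv' => lt_asymm hv hv'
  · simp only [← reflectionHom_skeleton_apply, h]

def ball (n : ℕ) : Set Γ := {g | wordLength {gen 0, gen 1, gen 2} g ≤ n}

theorem range_gen : Set.range gen = {gen 0, gen 1, gen 2} := by
  ext; simp [Fin.exists_fin_succ, eq_comm]

theorem exists_word_of_mem_ball {n : ℕ} {g : Γ} (hg : g ∈ ball n) :
    ∃ w : List (Fin 3), w.length ≤ n ∧ (w.map gen).prod = g := by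
  obtain ⟨l, hlen, hl, rfl⟩ := exists_list_length_eq_wordLength
    (range_gen ▸ PresentedGroup.closure_range_of pglRels) g
  rw [← range_gen] at hl
  obtain ⟨w, rfl⟩ : l ∈ Set.range (List.map gen) := by
    rw [Set.range_list_map]
    intro x hx
    rcases hl x hx with h | ⟨i, hi⟩
    · exact h
    · exact ⟨i, by rw [← inv_inv x, ← hi, gen_inv]⟩
  exact ⟨w, by rw [← List.length_map (f := gen), hlen]; exact hg, rfl⟩

def normalFormCodes (n : ℕ) : Finset (List (Fin 3) × List Bool × List (Fin 3)) :=
  heads ×ˢ flagsUpTo n ×ˢ tails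

def evalNormalForm (c : List (Fin 3) × List Bool × List (Fin 3)) : Γ :=
  ((c.1 ++ skeleton c.2.1 ++ c.2.2).map gen).prod

theorem ball_subset_image (n : ℕ) : ball n ⊆ evalNormalForm '' normalFormCodes n := by
  intro g hg
  obtain ⟨w, hwn, rfl⟩ := exists_word_of_mem_ball hg
  obtain ⟨w', hw', heq, hlen⟩ := exists_irreducible_prod_eq w
  obtain ⟨h, hh, l, t, ht, rfl⟩ := exists_normalForm hw'
  refine ⟨(h, l, t), ?_, heq⟩
  simp only [normalFormCodes, Finset.coe_product, Set.mem_prod, Finset.mem_coe, mem_flagsUpTo]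
  simp only [List.length_append] at hlen
  exact ⟨hh, by omega, ht⟩

theorem ball_finite (n : ℕ) : (ball n).Finite :=
  ((normalFormCodes n).finite_toSet.image _).subset (ball_subset_image n)

theorem natCard_ball_le (n : ℕ) : Nat.card (ball n) ≤ 12 * #(flagsUpTo n) := by
  rw [Nat.card_coe_set_eq]
  calc (ball n).ncard ≤ (evalNormalForm '' normalFormCodes n).ncard :=
        Set.ncard_le_ncard (ball_subset_image n) ((normalFormCodes n).finite_toSet.image _)
    _ ≤ #(normalFormCodes n) := (Set.ncard_image_le (Finset.finite_toSet _)).trans_eq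
        (Set.ncard_coe_finset _)
    _ = 12 * #(flagsUpTo n) := by
        simp only [normalFormCodes, Finset.card_product]
        rw [show #heads = 4 from rfl, show #tails = 3 from rfl]
        ring

theorem card_flagsUpTo_le_natCard_ball (n : ℕ) : #(flagsUpTo n) ≤ Nat.card (ball n) := by
  rw [Nat.card_coe_set_eq, ← Set.ncard_coe_finset,
    ← Set.ncard_image_of_injective _ injective_prod_skeleton]
  refine Set.ncard_le_ncard ?_ (ball_finite n)
  rintro _ ⟨l, hl, rfl⟩
  refine (wordLength_prod_le fun x hx => ?_).trans (by simpa [mem_flagsUpTo] using hl)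
  obtain ⟨i, -, rfl⟩ := List.mem_map.1 hx
  exact Or.inl (range_gen ▸ Set.mem_range_self i)

end PGL

/-- The exponential growth rate of `PGL(2,ℤ) = ⟨a, b, c ∣ a² = b² = c² = (ab)² = (ac)³ = 1⟩`
with respect to `S = {a, b, c}` equals the unique positive root `α` of `z³ - z - 1`. -/
theorem pgl_growth_rate (α : ℝ) (hα_pos : 0 < α) (hα_root : α ^ 3 - α - 1 = 0) :
    letI a : PresentedGroup pglRels := PresentedGroup.of 0
    letI b : PresentedGroup pglRels := PresentedGroup.of 1
    letI c : PresentedGroup pglRels := PresentedGroup.of 2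
    Tendsto
      (fun n : ℕ =>
        (Nat.card {g : PresentedGroup pglRels | wordLength {a, b, c} g ≤ n} : ℝ) ^
          (1 / (n : ℝ)))
      atTop (nhds α) := by
  show Tendsto (fun n : ℕ => (Nat.card (PGL.ball n) : ℝ) ^ (1 / (n : ℝ))) atTop (𝓝 α)
  have hα : α ^ 3 = α + 1 := by linarith
  have h1 : 1 ≤ α := by nlinarith [sq_nonneg (α - 1)]
  have h2 : α ≤ 2 := by nlinarith [sq_nonneg α]
  refine tendsto_rpow_one_div_of_mul_pow_le_of_le_mul_pow (c := 1 / 2) (C := 36) hα_pos.le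
    (by norm_num) (fun n => ?_) (fun n => ?_)
  · exact (PGL.half_mul_pow_le_card_flagsUpTo hα h2 n).trans
      (by exact_mod_cast PGL.card_flagsUpTo_le_natCard_ball n)
  · calc (Nat.card (PGL.ball n) : ℝ) ≤ 12 * #(PGL.flagsUpTo n) := by
          exact_mod_cast PGL.natCard_ball_le n
      _ ≤ 36 * α ^ n := by linarith [PGL.card_flagsUpTo_add_one_le hα h1 n]
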